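/- arXiv:2410.06749 — 2 statements merged into one kernel-verified Lean document; each statement's English description precedes it below -/
import Mathlib

section
/- If the real sequence a = (a_k) is unbounded, then there exists an initial point z_0 ∈ ℓ² ⊕ ℓ² and a finite time T > 0 such that the coordinatewise hyperbolic-oscillator trajectory z(t, z_0) with q_k(t) = q_{0,k} cosh(a_k t) + p_{0,k} sinh(a_k t), p_k(t) = p_{0,k} cosh(a_k t) + q_{0,k} sinh(a_k t) does not belong to ℓ² ⊕ ℓ² at time t = T (the squared norm series diverges). -/
/-- Coordinatewise `q`-component of the hyperbolic oscillator trajectory. -/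
noncomputable def qTraj (a q0 p0 : ℕ → ℝ) (t : ℝ) (k : ℕ) : ℝ :=
  q0 k * Real.cosh (a k * t) + p0 k * Real.sinh (a k * t)

/-- Coordinatewise `p`-component of the hyperbolic oscillator trajectory. -/
noncomputable def pTraj (a q0 p0 : ℕ → ℝ) (t : ℝ) (k : ℕ) : ℝ :=
  p0 k * Real.cosh (a k * t) + q0 k * Real.sinh (a k * t)

/-- If the frequency sequence `a` is unbounded, then there is an initial point in
`ℓ² ⊕ ℓ²` and a finite time `T > 0` at which the trajectory has left `ℓ² ⊕ ℓ²`. -/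
theorem stmt1 (a : ℕ → ℝ) (ha : ¬ ∃ C, ∀ k, |a k| ≤ C) :
    ∃ q0 p0 : ℕ → ℝ, Summable (fun k => (q0 k) ^ 2 + (p0 k) ^ 2) ∧
      ∃ T : ℝ, 0 < T ∧
        ¬ Summable (fun k => (qTraj a q0 p0 T k) ^ 2 + (pTraj a q0 p0 T k) ^ 2) := by
  push_neg at ha
  -- ha : ∀ C, ∃ k, C < |a k|
  -- build an injective φ with n ≤ |a (φ n)| and |a ∘ φ| strictly increasing
  have h : ∀ c : ℝ, ∃ k, c < |a k| := ha
  let φ : ℕ → ℕ := fun n => Nat.rec (h 0).choose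
    (fun n k => (h (max (n+1 : ℕ) |a k|)).choose) n
  have hφ0 : (0:ℝ) < |a (φ 0)| := (h 0).choose_spec
  have hφs : ∀ n : ℕ, max ((n:ℝ)+1) |a (φ n)| < |a (φ (n+1))| := by
    intro n
    have := (h (max (n+1 : ℕ) |a (φ n)|)).choose_spec
    simpa [φ] using this
  have hmono : StrictMono (fun n => |a (φ n)|) := by
    apply strictMono_nat_of_lt_succ
    intro n
    exact lt_of_le_of_lt (le_max_right _ _) (hφs n)
  have hinj : Function.Injective φ := by
    intro m n hmn
    by_contra hne
    rcases lt_or_gt_of_ne hne with hlt | hlt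
    · exact absurd (congrArg (fun k => |a k|) hmn) (ne_of_lt (hmono hlt))
    · exact absurd (congrArg (fun k => |a k|) hmn) (ne_of_gt (hmono hlt))
  have hgrow : ∀ n : ℕ, (n:ℝ) ≤ |a (φ n)| := by
    intro n
    cases n with
    | zero => exact le_of_lt (by simpa using hφ0)
    | succ m =>
      have := hφs m
      have h1 : ((m:ℝ)+1) ≤ max ((m:ℝ)+1) |a (φ m)| := le_max_left _ _
      push_cast
      linarith [lt_of_le_of_lt h1 this]
  classical
  set q0 : ℕ → ℝ := fun k => if k ∈ Set.range φ then Real.exp (-|a k|) else 0 with hq0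
  set p0 : ℕ → ℝ := fun k => if 0 ≤ a k then q0 k else -q0 k with hp0
  have hp0sq : ∀ k, (p0 k)^2 = (q0 k)^2 := by
    intro k; simp only [hp0]; split <;> ring
  refine ⟨q0, p0, ?_, 1, one_pos, ?_⟩
  · -- summability
    have hzero : ∀ k ∉ Set.range φ, (fun k => (q0 k)^2 + (p0 k)^2) k = 0 := by
      intro k hk
      simp only [hp0sq, hq0, if_neg hk]
      ring
    rw [← hinj.summable_iff hzero]
    have hle : ∀ n, ((fun k => (q0 k)^2 + (p0 k)^2) ∘ φ) n ≤ 2 * (Real.exp (-2))^n := by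
      intro n
      have hmem : φ n ∈ Set.range φ := ⟨n, rfl⟩
      simp only [Function.comp, hp0sq, hq0, if_pos hmem]
      have : Real.exp (-|a (φ n)|) ^ 2 = Real.exp (-(2 * |a (φ n)|)) := by
        rw [← Real.exp_nat_mul]; ring_nf
      rw [this]
      have h2 : (Real.exp (-2))^n = Real.exp (-(2*n)) := by
        rw [← Real.exp_nat_mul]; ring_nf
      rw [h2]
      have := hgrow n
      have hle2 : Real.exp (-(2 * |a (φ n)|)) ≤ Real.exp (-(2*n)) :=
        Real.exp_le_exp.mpr (by linarith)
      linarith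
    have hpos : ∀ n, 0 ≤ ((fun k => (q0 k)^2 + (p0 k)^2) ∘ φ) n := by
      intro n; simp only [Function.comp]; positivity
    refine Summable.of_nonneg_of_le hpos hle ?_
    exact (summable_geometric_of_lt_one (le_of_lt (Real.exp_pos _))
      (by rw [Real.exp_lt_one_iff]; norm_num)).mul_left 2
  · -- non-summability at T = 1
    intro hs
    have hterm : ∀ n, (1:ℝ) ≤ (fun k => (qTraj a q0 p0 1 k)^2 + (pTraj a q0 p0 1 k)^2) (φ n) := by
      intro n
      have hmem : φ n ∈ Set.range φ := ⟨n, rfl⟩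
      have hq : qTraj a q0 p0 1 (φ n) ^ 2 = 1 := by
        simp only [qTraj, mul_one]
        by_cases hpos : 0 ≤ a (φ n)
        · have : p0 (φ n) = q0 (φ n) := by simp [hp0, hpos]
          rw [this, ← mul_add, Real.cosh_add_sinh]
          simp only [hq0, if_pos hmem]
          rw [← Real.exp_add]
          rw [abs_of_nonneg hpos]
          simp
        · have : p0 (φ n) = -q0 (φ n) := by simp [hp0, hpos]
          rw [this]
          have hrw : q0 (φ n) * Real.cosh (a (φ n)) + -q0 (φ n) * Real.sinh (a (φ n))
              = q0 (φ n) * (Real.cosh (a (φ n)) - Real.sinh (a (φ n))) := by ring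
          rw [hrw, Real.cosh_sub_sinh]
          simp only [hq0, if_pos hmem]
          rw [← Real.exp_add]
          rw [abs_of_neg (lt_of_not_ge hpos)]
          simp
      have hp : 0 ≤ pTraj a q0 p0 1 (φ n) ^ 2 := sq_nonneg _
      simp only
      linarith [hq.ge]
    have hcomp : Summable ((fun k => (qTraj a q0 p0 1 k)^2 + (pTraj a q0 p0 1 k)^2) ∘ φ) :=
      hs.comp_injective hinj
    have htend := hcomp.tendsto_atTop_zero
    have := (htend.eventually (gt_mem_nhds (show (0:ℝ) < 1 by norm_num))).exists
    obtain ⟨n, hn⟩ := this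
    exact absurd (hterm n) (not_le.mpr hn)
end

section
/- Given a nonnegative finitely additive measure λ on a ring r of subsets of a set X, define the outer and inner measures of A ⊆ X by λ̄(A) = inf{λ(B) : B ∈ r, B ⊇ A} and λ̲(A) = sup{λ(B) : B ∈ r, B ⊆ A}. Then the collection ℛ = {A ⊆ X : λ̄(A) = λ̲(A) < ∞} is a ring of sets containing r, and the common value defines a finitely additive extension of λ to ℛ. -/
open MeasureTheory

/-! A set `A` lies in `ℛ` exactly when for every `ε > 0` it is sandwiched as `B ⊆ A ⊆ D` between
members of `r` with `λ (D \ B) ≤ ε`. Sandwiches of `A₁` and `A₂` combine into sandwiches of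
`A₁ ∪ A₂` and `A₁ \ A₂` whose gap is at most the sum of the two gaps, so `ℛ` is a ring.
Additivity on `ℛ` holds because the outer measure is subadditive, the inner measure is
superadditive on disjoint sets, and the two agree on `ℛ`. -/

/-- Outer measure of `A` induced by a set function `μ` on a ring `r`. -/
noncomputable def outerM {X : Type*} (r : Set (Set X)) (μ : Set X → ENNReal)
    (A : Set X) : ENNReal :=
  ⨅ (B : Set X) (_ : B ∈ r) (_ : A ⊆ B), μ B

/-- Inner measure of `A` induced by a set function `μ` on a ring `r`. -/
noncomputable def innerM {X : Type*} (r : Set (Set X)) (μ : Set X → ENNReal)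
    (A : Set X) : ENNReal :=
  ⨆ (B : Set X) (_ : B ∈ r) (_ : B ⊆ A), μ B

open scoped ENNReal

def jordanMeasurableSets {X : Type*} (C : Set (Set X)) (μ : Set X → ℝ≥0∞) : Set (Set X) :=
  {A | outerM C μ A = innerM C μ A ∧ outerM C μ A ≠ ⊤}

section SetFunction

variable {X : Type*} {C : Set (Set X)} {μ : Set X → ℝ≥0∞} {A B : Set X}

lemma outerM_le (hB : B ∈ C) (hAB : A ⊆ B) : outerM C μ A ≤ μ B :=
  iInf₂_le_of_le B hB (iInf_le _ hAB)

lemma le_innerM (hB : B ∈ C) (hBA : B ⊆ A) : μ B ≤ innerM C μ A :=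
  le_iSup₂_of_le B hB (le_iSup_of_le hBA le_rfl)

lemma exists_superset_lt_outerM_add (hA : outerM C μ A ≠ ⊤) {ε : ℝ≥0∞} (hε : ε ≠ 0) :
    ∃ D ∈ C, A ⊆ D ∧ μ D < outerM C μ A + ε := by
  have := ENNReal.lt_add_right hA hε
  conv_lhs at this => rw [outerM]
  simpa only [iInf_lt_iff, exists_prop] using this

lemma exists_subset_innerM_lt_add (h₀ : ∅ ∈ C) (hA : innerM C μ A ≠ ⊤) {ε : ℝ≥0∞}
    (hε : ε ≠ 0) : ∃ B ∈ C, B ⊆ A ∧ innerM C μ A < μ B + ε := by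
  by_contra! h
  have hεA : ε ≤ innerM C μ A := le_add_self.trans (h ∅ h₀ (Set.empty_subset A))
  refine (ENNReal.sub_lt_self hA (hε.bot_lt.trans_le hεA).ne' hε).not_ge ?_
  exact iSup₂_le fun B hB => iSup_le fun hBA =>
    ENNReal.le_sub_of_add_le_right (ne_top_of_le_ne_top hA hεA) (h B hB hBA)

end SetFunction

section AddContent

variable {X : Type*} {C : Set (Set X)} {m : AddContent ℝ≥0∞ C} {A : Set X}

lemma outerM_union_le (hC : IsSetRing C) (A₁ A₂ : Set X) :
    outerM C m (A₁ ∪ A₂) ≤ outerM C m A₁ + outerM C m A₂ := by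
  conv_rhs => simp only [outerM, ENNReal.iInf_add, ENNReal.add_iInf]
  refine le_iInf₂ fun D₂ hD₂ => le_iInf fun hA₂ => le_iInf₂ fun D₁ hD₁ => le_iInf fun hA₁ => ?_
  exact (outerM_le (hC.union_mem hD₁ hD₂) (Set.union_subset_union hA₁ hA₂)).trans
    (addContent_union_le hC hD₁ hD₂)

lemma innerM_add_innerM_le_innerM_union (hC : IsSetRing C) {A₁ A₂ : Set X}
    (hA : Disjoint A₁ A₂) : innerM C m A₁ + innerM C m A₂ ≤ innerM C m (A₁ ∪ A₂) := by
  conv_lhs => simp only [innerM, iSup_and']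
  refine ENNReal.biSup_add_biSup_le' ⟨∅, hC.empty_mem, Set.empty_subset _⟩
    ⟨∅, hC.empty_mem, Set.empty_subset _⟩ fun B₁ hB₁ B₂ hB₂ => ?_
  rw [← addContent_union hC hB₁.1 hB₂.1 (hA.mono hB₁.2 hB₂.2)]
  exact le_innerM (hC.union_mem hB₁.1 hB₂.1) (Set.union_subset_union hB₁.2 hB₂.2)

lemma addContent_le_add_of_subset_union (hC : IsSetRing C) {s t u : Set X} (hs : s ∈ C)
    (ht : t ∈ C) (hu : u ∈ C) (h : s ⊆ t ∪ u) : m s ≤ m t + m u :=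
  (addContent_mono hC.isSetSemiring hs (hC.union_mem ht hu) h).trans (addContent_union_le hC ht hu)

lemma innerM_le_outerM (hC : IsSetRing C) (A : Set X) : innerM C m A ≤ outerM C m A :=
  iSup₂_le fun _ hB => iSup_le fun hBA => le_iInf₂ fun _ hD => le_iInf fun hAD =>
    addContent_mono hC.isSetSemiring hB hD (hBA.trans hAD)

lemma outerM_eq_of_mem (hC : IsSetRing C) (hA : A ∈ C) : outerM C m A = m A :=
  (outerM_le hA subset_rfl).antisymm <| le_iInf₂ fun _ hD => le_iInf fun hAD =>
    addContent_mono hC.isSetSemiring hA hD hAD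

variable (hC : IsSetRing C) (hm : ∀ s ∈ C, m s ≠ ⊤)
include hC hm

lemma mem_jordanMeasurableSets_iff :
    A ∈ jordanMeasurableSets C m ↔
      ∀ ε, 0 < ε → ∃ B ∈ C, ∃ D ∈ C, B ⊆ A ∧ A ⊆ D ∧ m (D \ B) ≤ ε := by
  constructor
  · rintro ⟨houter_eq, houter_ne⟩ ε hε
    have hε2 : ε / 2 ≠ 0 := (ENNReal.half_pos hε.ne').ne'
    obtain ⟨D, hD, hAD, hDlt⟩ := exists_superset_lt_outerM_add houter_ne hε2
    obtain ⟨B, hB, hBA, hBlt⟩ :=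
      exists_subset_innerM_lt_add hC.empty_mem (houter_eq ▸ houter_ne) hε2
    refine ⟨B, hB, D, hD, hBA, hAD, ?_⟩
    rw [addContent_sdiff_of_ne_top m hC hm hD hB (hBA.trans hAD), tsub_le_iff_left]
    calc m D ≤ innerM C m A + ε / 2 := houter_eq ▸ hDlt.le
      _ ≤ m B + ε / 2 + ε / 2 := by gcongr
      _ = m B + ε := by rw [add_assoc, ENNReal.add_halves]
  · intro h
    obtain ⟨-, -, D₀, hD₀, -, hAD₀, -⟩ := h 1 one_pos
    refine ⟨le_antisymm ?_ (innerM_le_outerM hC A),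
      ne_top_of_le_ne_top (hm D₀ hD₀) (outerM_le hD₀ hAD₀)⟩
    refine ENNReal.le_of_forall_pos_le_add fun ε hε _ => ?_
    obtain ⟨B, hB, D, hD, hBA, hAD, hgap⟩ := h ε (ENNReal.coe_pos.2 hε)
    calc outerM C m A ≤ m D := outerM_le hD hAD
      _ ≤ m B + m (D \ B) :=
        addContent_le_add_of_subset_union hC hD hB (hC.sdiff_mem hD hB) le_sup_sdiff
      _ ≤ innerM C m A + ε := add_le_add (le_innerM hB hBA) hgap

lemma subset_jordanMeasurableSets : C ⊆ jordanMeasurableSets C m := fun A hA =>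
  (mem_jordanMeasurableSets_iff hC hm).2 fun ε _ =>
    ⟨A, hA, A, hA, subset_rfl, subset_rfl, by simp⟩

variable {A₁ A₂ : Set X} (h₁ : A₁ ∈ jordanMeasurableSets C m)
  (h₂ : A₂ ∈ jordanMeasurableSets C m)
include h₁ h₂

lemma union_mem_jordanMeasurableSets : A₁ ∪ A₂ ∈ jordanMeasurableSets C m := by
  rw [mem_jordanMeasurableSets_iff hC hm] at *
  intro ε hε
  obtain ⟨B₁, hB₁, D₁, hD₁, hBA₁, hAD₁, hgap₁⟩ := h₁ (ε / 2) (ENNReal.half_pos hε.ne')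
  obtain ⟨B₂, hB₂, D₂, hD₂, hBA₂, hAD₂, hgap₂⟩ := h₂ (ε / 2) (ENNReal.half_pos hε.ne')
  refine ⟨B₁ ∪ B₂, hC.union_mem hB₁ hB₂, D₁ ∪ D₂, hC.union_mem hD₁ hD₂,
    Set.union_subset_union hBA₁ hBA₂, Set.union_subset_union hAD₁ hAD₂, ?_⟩
  calc m ((D₁ ∪ D₂) \ (B₁ ∪ B₂)) ≤ m (D₁ \ B₁) + m (D₂ \ B₂) := by
        refine addContent_le_add_of_subset_union hC
          (hC.sdiff_mem (hC.union_mem hD₁ hD₂) (hC.union_mem hB₁ hB₂))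
          (hC.sdiff_mem hD₁ hB₁) (hC.sdiff_mem hD₂ hB₂) fun x => ?_
        simp only [Set.mem_sdiff, Set.mem_union]
        tauto
    _ ≤ ε / 2 + ε / 2 := add_le_add hgap₁ hgap₂
    _ = ε := ENNReal.add_halves ε

lemma sdiff_mem_jordanMeasurableSets : A₁ \ A₂ ∈ jordanMeasurableSets C m := by
  rw [mem_jordanMeasurableSets_iff hC hm] at *
  intro ε hε
  obtain ⟨B₁, hB₁, D₁, hD₁, hBA₁, hAD₁, hgap₁⟩ := h₁ (ε / 2) (ENNReal.half_pos hε.ne')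
  obtain ⟨B₂, hB₂, D₂, hD₂, hBA₂, hAD₂, hgap₂⟩ := h₂ (ε / 2) (ENNReal.half_pos hε.ne')
  refine ⟨B₁ \ D₂, hC.sdiff_mem hB₁ hD₂, D₁ \ B₂, hC.sdiff_mem hD₁ hB₂,
    Set.sdiff_subset_sdiff hBA₁ hAD₂, Set.sdiff_subset_sdiff hAD₁ hBA₂, ?_⟩
  calc m ((D₁ \ B₂) \ (B₁ \ D₂)) ≤ m (D₁ \ B₁) + m (D₂ \ B₂) := by
        refine addContent_le_add_of_subset_union hC
          (hC.sdiff_mem (hC.sdiff_mem hD₁ hB₂) (hC.sdiff_mem hB₁ hD₂))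
          (hC.sdiff_mem hD₁ hB₁) (hC.sdiff_mem hD₂ hB₂) fun x => ?_
        simp only [Set.mem_sdiff, Set.mem_union]
        tauto
    _ ≤ ε / 2 + ε / 2 := add_le_add hgap₁ hgap₂
    _ = ε := ENNReal.add_halves ε

lemma outerM_union_of_disjoint (hA : Disjoint A₁ A₂) :
    outerM C m (A₁ ∪ A₂) = outerM C m A₁ + outerM C m A₂ := by
  refine (outerM_union_le hC A₁ A₂).antisymm ?_
  calc outerM C m A₁ + outerM C m A₂ = innerM C m A₁ + innerM C m A₂ := by rw [h₁.1, h₂.1]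
    _ ≤ innerM C m (A₁ ∪ A₂) := innerM_add_innerM_le_innerM_union hC hA
    _ = outerM C m (A₁ ∪ A₂) := (union_mem_jordanMeasurableSets hC hm h₁ h₂).1.symm

omit h₁ h₂

lemma isSetRing_jordanMeasurableSets : IsSetRing (jordanMeasurableSets C m) where
  empty_mem := subset_jordanMeasurableSets hC hm hC.empty_mem
  union_mem _ _ := union_mem_jordanMeasurableSets hC hm
  sdiff_mem _ _ := sdiff_mem_jordanMeasurableSets hC hm

end AddContent

/-- The collection of sets whose outer and inner measures agree and are finite is a
ring containing `r`, and the common value extends `μ` finitely additively. -/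
theorem stmt14 {X : Type*} (r : Set (Set X)) (hr : MeasureTheory.IsSetRing r)
    (μ : Set X → ENNReal) (hfin : ∀ A ∈ r, μ A ≠ ⊤)
    (hadd : ∀ A B : Set X, A ∈ r → B ∈ r → Disjoint A B → μ (A ∪ B) = μ A + μ B) :
    MeasureTheory.IsSetRing
      {A : Set X | outerM r μ A = innerM r μ A ∧ outerM r μ A ≠ ⊤} ∧
    r ⊆ {A : Set X | outerM r μ A = innerM r μ A ∧ outerM r μ A ≠ ⊤} ∧
    (∀ A ∈ r, outerM r μ A = μ A) ∧
    (∀ A B : Set X,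
      A ∈ {A : Set X | outerM r μ A = innerM r μ A ∧ outerM r μ A ≠ ⊤} →
      B ∈ {A : Set X | outerM r μ A = innerM r μ A ∧ outerM r μ A ≠ ⊤} →
      Disjoint A B → outerM r μ (A ∪ B) = outerM r μ A + outerM r μ B) := by
  have hempty : μ ∅ = 0 := by
    have h := hadd ∅ ∅ hr.empty_mem hr.empty_mem disjoint_bot_left
    rw [Set.union_empty] at h
    exact (ENNReal.add_right_inj (hfin ∅ hr.empty_mem)).1 (by rw [add_zero]; exact h.symm)
  obtain ⟨m, rfl⟩ : ∃ m : AddContent ℝ≥0∞ r, ⇑m = μ :=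
    ⟨hr.addContent_of_union μ hempty fun hs ht hst => hadd _ _ hs ht hst, rfl⟩
  exact ⟨isSetRing_jordanMeasurableSets hr hfin, subset_jordanMeasurableSets hr hfin,
    fun A hA => outerM_eq_of_mem hr hA,
    fun A B hA hB hAB => outerM_union_of_disjoint hr hfin hA hB hAB⟩
end
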